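/- The system S_{z,λ,1} (identity permutation boundary conditions) has exactly one admissible state, and its Boltzmann weight is z^{λ+ρ}. -/

import Mathlib

abbrev LP (r : ℕ) := AddMonoidAlgebra ℚ (Fin r → ℤ)

noncomputable def mono {r : ℕ} (μ : Fin r → ℤ) : LP r := .ofCoeff (Finsupp.single μ (1 : ℚ))

/-- The simple reflection `s_i` of `S_r`, swapping `i` and `i+1` (0-based). -/
def sPerm (r i : ℕ) : Equiv.Perm (Fin r) :=
  if h : i + 1 < r then Equiv.swap ⟨i, Nat.lt_of_succ_lt h⟩ ⟨i + 1, h⟩ else 1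

/-- The simple root `α_i = e_i - e_{i+1}`. -/
def alph (r i : ℕ) : Fin r → ℤ :=
  if h : i + 1 < r then Pi.single ⟨i, Nat.lt_of_succ_lt h⟩ 1 - Pi.single ⟨i + 1, h⟩ 1 else 0

/-- The pairing `⟨μ, α_i^∨⟩ = μ_i - μ_{i+1}`. -/
def pair (r i : ℕ) (μ : Fin r → ℤ) : ℤ :=
  if h : i + 1 < r then μ ⟨i, Nat.lt_of_succ_lt h⟩ - μ ⟨i + 1, h⟩ else 0

/-- The isobaric Demazure operator `∂_i` on the monomial `z^μ`, given by the standard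
explicit formula equivalent to `∂_i f(z) = (f(z) - z^{-α_i} f(s_i z))/(1 - z^{-α_i})`. -/
noncomputable def demMono (r i : ℕ) (μ : Fin r → ℤ) : LP r :=
  if 0 ≤ pair r i μ then ∑ t ∈ Finset.range ((pair r i μ).toNat + 1), mono (μ - t • alph r i)
  else if pair r i μ = -1 then 0
  else -∑ t ∈ Finset.range ((-pair r i μ).toNat - 1), mono (μ + (t + 1) • alph r i)

/-- The isobaric Demazure operator `∂_i` on Laurent polynomials, extended linearly. -/
noncomputable def dem (r i : ℕ) (f : LP r) : LP r :=
  Finsupp.sum f.coeff fun μ c => c • demMono r i μ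

/-- The modified Demazure operator `∂°_i = ∂_i - 1`. -/
noncomputable def demC (r i : ℕ) (f : LP r) : LP r := dem r i f - f

/-- The action of `s_i` on Laurent polynomials: `(s_i f)(z) = f(s_i z)`. -/
noncomputable def sAct (r i : ℕ) (f : LP r) : LP r :=
  .ofCoeff (Finsupp.mapDomain (fun μ => μ ∘ (sPerm r i)) f.coeff)

/-- `∂_w = ∂_{i_1} ⋯ ∂_{i_k}` along a word `(i_1, …, i_k)`. -/
noncomputable def demWord (r : ℕ) : List ℕ → LP r → LP r
  | [], f => f
  | i :: l, f => dem r i (demWord r l f)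

/-- `∂°_w = ∂°_{i_1} ⋯ ∂°_{i_k}` along a word `(i_1, …, i_k)`. -/
noncomputable def demCWord (r : ℕ) : List ℕ → LP r → LP r
  | [], f => f
  | i :: l, f => demC r i (demCWord r l f)

/-- All letters of the word are valid indices of simple reflections of `S_r`. -/
def OKWord (r : ℕ) (l : List ℕ) : Prop := ∀ i ∈ l, i + 1 < r

def wordProd (r : ℕ) (l : List ℕ) : Equiv.Perm (Fin r) := (l.map (sPerm r)).prod

/-- Coxeter length of a permutation. -/
noncomputable def len (r : ℕ) (w : Equiv.Perm (Fin r)) : ℕ :=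
  sInf {n | ∃ l : List ℕ, OKWord r l ∧ wordProd r l = w ∧ l.length = n}

/-- `l` is a reduced word. -/
def Reduced (r : ℕ) (l : List ℕ) : Prop :=
  OKWord r l ∧ l.length = len r (wordProd r l)

/-- Bruhat order on `S_r`, via the subword characterization. -/
def bruhatLE (r : ℕ) (y w : Equiv.Perm (Fin r)) : Prop :=
  ∃ l : List ℕ, Reduced r l ∧ wordProd r l = w ∧
    ∃ l' : List ℕ, l'.Sublist l ∧ wordProd r l' = y

/-- The Young diagram of a partition `λ` with at most `r` parts. -/
noncomputable def lamDiag {r : ℕ} (lam : Fin r → ℕ)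
    (h : (List.ofFn lam).Pairwise (· ≥ ·)) : YoungDiagram :=
  YoungDiagram.ofRowLens (List.ofFn lam) (List.sortedGE_iff_pairwise.mpr h)

/-- The number of entries `< m` in row `j` of the tableau `T`; since rows weakly
increase, this is the length of row `j` of the tableau obtained from `T` by deleting
all entries `≥ m`. -/
def cntLt {μ : YoungDiagram} (T : SemistandardYoungTableau μ) (j m : ℕ) : ℕ :=
  ((Finset.range (μ.rowLen j)).filter (fun k => T j k < m)).card

/-- The weight of a tableau: `wtT T m` is the number of entries equal to `m`.
(Entries are 0-based: the letter `m ∈ {0, …, r-1}` corresponds to `m+1 ∈ {1, …, r}`.) -/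
def wtT {μ : YoungDiagram} (T : SemistandardYoungTableau μ) (m : ℕ) : ℕ :=
  (μ.cells.filter (fun c => T c.1 c.2 = m)).card

/-- A Gelfand-Tsetlin pattern with `r` rows and top row `λ`: a triangular array
`(a i j)`, rows `i = 0, …, r-1` (from the top), with `a i j` defined for
`i ≤ j ≤ r-1` (and normalized to `0` outside the triangle), top row `λ`, and the
interlacing inequalities `a i j ≥ a (i+1) (j+1) ≥ a i (j+1)`. -/
structure GTPattern (r : ℕ) (lam : Fin r → ℕ) where
  a : ℕ → ℕ → ℕ
  top : ∀ j : Fin r, a 0 (j : ℕ) = lam j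
  interlace : ∀ i j : ℕ, i ≤ j → j + 1 < r →
    a (i + 1) (j + 1) ≤ a i j ∧ a i (j + 1) ≤ a (i + 1) (j + 1)
  outside : ∀ i j : ℕ, ¬(i ≤ j ∧ j < r) → a i j = 0

/-- The sum of the `i`-th row of a Gelfand-Tsetlin pattern. -/
def GTPattern.rowSum {r : ℕ} {lam : Fin r → ℕ} (P : GTPattern r lam) (i : ℕ) : ℕ :=
  ∑ j ∈ Finset.Ico i r, P.a i j

/-- `true` = spin −, `false` = spin +.  The admissible five-vertex configurations
`(left, top, right, bottom)`: spin is conserved, and the type-`b₁` configuration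
`(+,−,+,−)` is forbidden.  This leaves exactly the five configurations
`(+,+,+,+)`, `(−,−,−,−)`, `(−,+,−,+)`, `(−,+,+,−)`, `(+,−,−,+)`. -/
def admU (a b c d : Bool) : Prop :=
  ((if a then 1 else 0) + (if b then 1 else 0) : ℕ)
      = (if c then 1 else 0) + (if d then 1 else 0) ∧
  ¬(a = false ∧ b = true ∧ c = false ∧ d = true)

/-- A state of the uncolored five-vertex model `S_{z,λ}`: a grid with rows
`0, …, r-1` (top to bottom) and columns labeled `0, …, N` from *right to left*.
`V i j` is the spin on the vertical edge in column (label) `j` between row `i-1`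
and row `i` (`V 0` is the top boundary, `V r` the bottom); `H i k` is the spin on
the `k`-th horizontal edge of row `i`, counted from the left (`H i 0` is the left
boundary, `H i (N+1)` the right boundary).  The vertex of row `i` and column label
`j` has left edge `H i (N-j)`, top edge `V i j`, right edge `H i (N-j+1)` and
bottom edge `V (i+1) j`.  Boundary conditions: the top boundary has `−` exactly in
the columns labeled `λ_i + r - 1 - i` (0-based `i`), the left and bottom boundary
are `+`, the right boundary is `−`. -/
structure UState (r N : ℕ) (lam : Fin r → ℕ) where
  V : Fin (r + 1) → Fin (N + 1) → Bool
  H : Fin r → Fin (N + 2) → Bool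
  top : ∀ j : Fin (N + 1), V 0 j = true ↔ ∃ i : Fin r, (j : ℕ) = lam i + (r - 1 - (i : ℕ))
  bottom : ∀ j, V (Fin.last r) j = false
  left : ∀ i, H i 0 = false
  right : ∀ i, H i (Fin.last (N + 1)) = true
  adm : ∀ (i : Fin r) (j : Fin (N + 1)),
    admU (H i ⟨N - (j : ℕ), by omega⟩) (V i.castSucc j)
      (H i ⟨N - (j : ℕ) + 1, by omega⟩) (V i.succ j)

/-- The Boltzmann weight of a state: a vertex in row `i` contributes `z_i` exactly
when the spin on the edge to its left is `−`, otherwise `1`. -/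
noncomputable def uweight {r N : ℕ} {lam : Fin r → ℕ} (s : UState r N lam) : LP r :=
  ∏ i : Fin r, ∏ k : Fin (N + 1),
    if s.H i k.castSucc then mono (Pi.single i 1) else 1

/-- The partition function of the uncolored five-vertex model. -/
noncomputable def Zpart (r N : ℕ) (lam : Fin r → ℕ) : LP r :=
  ∑ᶠ s : UState r N lam, uweight s

/-- The Weyl vector `ρ = (r-1, r-2, …, 0)`. -/
def rhoWt (r : ℕ) : Fin r → ℤ := fun i => ((r - 1 - (i : ℕ) : ℕ) : ℤ)

/-- The Schur polynomial `s_λ(z_1, …, z_r)` as a Laurent polynomial, via its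
combinatorial definition: the sum of `z^{wt T}` over semistandard Young tableaux of
shape `λ` with entries in `{1, …, r}` (0-based: entries `< r`). -/
noncomputable def schurL (r : ℕ) (μ : YoungDiagram) : LP r :=
  ∑ᶠ T : {T : SemistandardYoungTableau μ // ∀ c ∈ μ.cells, T.1 c.1 c.2 < r},
    mono fun i => (wtT T.1 (i : ℕ) : ℤ)

/-- Colored spins: `none` is the spin `+`, and `some c` is a `−` spin carrying the
colour `c_{c+1}` (0-based `c`); the colours are ordered `c_1 > c_2 > ⋯ > c_r`, so a
*smaller* index means a *larger* colour.  Admissible colored configurations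
`(left, top, right, bottom)`: type `a₁` (all `+`); type `a₂` (left and top colored,
the larger colour exits right and the smaller colour exits bottom — in indices,
right is the `min` and bottom is the `max`); types `b₂`/`c₁` (colored path entering
on the left and exiting right or bottom); type `c₂` (entering on top and exiting
right).  The type-`b₁` configuration (entering on top and exiting bottom with `+`
horizontally) is forbidden, as is everything else. -/
def admC (r : ℕ) (a b c d : Option (Fin r)) : Prop :=
  (a = none ∧ b = none ∧ c = none ∧ d = none) ∨
  (∃ x y : Fin r, a = some x ∧ b = some y ∧ c = some (min x y) ∧ d = some (max x y)) ∨
  (∃ x : Fin r, a = some x ∧ b = none ∧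
    ((c = some x ∧ d = none) ∨ (c = none ∧ d = some x))) ∨
  (∃ x : Fin r, a = none ∧ b = some x ∧ c = some x ∧ d = none)

/-- A state of the colored five-vertex model `S_{z,λ,w}`; grid coordinates as in the
uncolored model.  Boundary conditions: the top boundary carries colour `c_{i+1}`
(i.e. `some i`) exactly in the column labeled `λ_i + r - 1 - i` (0-based `i`); the
right boundary carries, from top to bottom, the colours `w c` (row `i` carries
`some (w⁻¹ i)`); all other boundary edges are `+`. -/
structure CState (r N : ℕ) (lam : Fin r → ℕ) (w : Equiv.Perm (Fin r)) where
  V : Fin (r + 1) → Fin (N + 1) → Option (Fin r)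
  H : Fin r → Fin (N + 2) → Option (Fin r)
  top : ∀ (i : Fin r) (j : Fin (N + 1)),
    V 0 j = some i ↔ (j : ℕ) = lam i + (r - 1 - (i : ℕ))
  bottom : ∀ j, V (Fin.last r) j = none
  left : ∀ i, H i 0 = none
  right : ∀ i : Fin r, H i (Fin.last (N + 1)) = some (w⁻¹ i)
  adm : ∀ (i : Fin r) (j : Fin (N + 1)),
    admC r (H i ⟨N - (j : ℕ), by omega⟩) (V i.castSucc j)
      (H i ⟨N - (j : ℕ) + 1, by omega⟩) (V i.succ j)

/-- The Boltzmann weight of a colored state: a vertex in row `i` contributes `z_i`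
exactly when the edge to its left is colored, otherwise `1`. -/
noncomputable def cweight {r N : ℕ} {lam : Fin r → ℕ} {w : Equiv.Perm (Fin r)}
    (s : CState r N lam w) : LP r :=
  ∏ i : Fin r, ∏ k : Fin (N + 1),
    if (s.H i k.castSucc).isSome then mono (Pi.single i 1) else 1

/-- The partition function of the colored five-vertex model `S_{z,λ,w}`. -/
noncomputable def Zcol (r N : ℕ) (lam : Fin r → ℕ) (w : Equiv.Perm (Fin r)) : LP r :=
  ∑ᶠ s : CState r N lam w, cweight s

/-!
The top boundary puts colour `c` in column `topCol lam c = λ_c + r - 1 - c`, which strictly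
decreases in `c`. Suppose the edges above row `i` carry exactly the colours `c ≥ i`, each in
column `topCol lam c`. Read from the left, row `i` stays `+` up to column `topCol lam i`, since
`+` on the left and on top forces `+` on the right. Read from the right, where the boundary
carries colour `i`, the row keeps colour `i` until the column where `i` enters from the top,
since no other vertex sends `i` to the right. So colour `i` turns right in its own column, the
other colours pass straight down, and below row `i` exactly the colours `c ≥ i + 1` remain.
By induction on the rows the state is unique, and as `topCol lam i` vertices of row `i` have a
coloured left edge, its weight is `∏ z_i ^ (λ_i + r - 1 - i) = z^(λ+ρ)`.
-/
theorem mono_add {r : ℕ} (μ ν : Fin r → ℤ) : mono (μ + ν) = mono μ * mono ν := by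
  simp [mono, AddMonoidAlgebra.single_mul_single]

theorem mono_zero {r : ℕ} : mono (0 : Fin r → ℤ) = 1 := by
  simp [mono, AddMonoidAlgebra.one_def]

theorem mono_sum {r : ℕ} {ι : Type*} (s : Finset ι) (f : ι → Fin r → ℤ) :
    mono (∑ i ∈ s, f i) = ∏ i ∈ s, mono (f i) := by
  induction s using Finset.cons_induction with
  | empty => exact mono_zero
  | cons a s _ ih => rw [Finset.sum_cons, Finset.prod_cons, mono_add, ih]

theorem mono_nsmul {r : ℕ} (n : ℕ) (μ : Fin r → ℤ) : mono (n • μ) = mono μ ^ n := by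
  simp [mono, AddMonoidAlgebra.single_pow]

theorem Fin.card_filter_sub_lt {N t : ℕ} (ht : t ≤ N) :
    (Finset.univ.filter fun k : Fin (N + 1) => N - t < (k : ℕ)).card = t := by
  have : Finset.univ.filter (fun k : Fin (N + 1) => N - t < (k : ℕ))
      = Finset.Ioi ⟨N - t, by omega⟩ := by
    ext k
    simp [Fin.lt_def]
  rw [this, Fin.card_Ioi, Fin.val_mk]
  omega

section GroundState

variable {r N : ℕ} {lam : Fin r → ℕ}

theorem admC_some_self {x : Fin r} {b : Option (Fin r)} (hb : ∀ y, b = some y → x ≤ y) :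
    admC r (some x) b (some x) b := by
  cases b with
  | none => exact Or.inr <| Or.inr <| Or.inl ⟨x, rfl, rfl, Or.inl ⟨rfl, rfl⟩⟩
  | some y =>
    have hxy := hb y rfl
    exact Or.inr <| Or.inl ⟨x, y, rfl, rfl, by rw [min_eq_left hxy], by rw [max_eq_right hxy]⟩

namespace admC

variable {a b c d : Option (Fin r)}

theorem right_eq_none (h : admC r a b c d) (ha : a = none) (hb : b = none) : c = none := by
  subst ha hb; unfold admC at h; aesop

theorem bottom_eq_none (h : admC r a b c d) (ha : a = none) : d = none := by
  subst ha; unfold admC at h; aesop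

theorem left_eq_of_right {x : Fin r} (h : admC r a b c d) (hc : c = some x) (hb : b ≠ some x) :
    a = some x := by
  subst hc; unfold admC at h; aesop (add safe le_of_lt)

theorem bottom_eq_top {x : Fin r} (h : admC r a b c d) (ha : a = some x) (hc : c = some x) :
    d = b := by
  subst ha hc; unfold admC at h; aesop

end admC

def topCol (lam : Fin r → ℕ) (i : Fin r) : ℕ := lam i + (r - 1 - i)

theorem topCol_strictAnti (hlam : Antitone lam) : StrictAnti (topCol lam) := by
  intro i j hij
  have := hlam hij.le
  have : (i : ℕ) < j := hij
  have := j.isLt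
  unfold topCol
  omega

theorem topCol_le (hr : 0 < r) (hN : lam ⟨0, hr⟩ + r - 1 ≤ N) (hlam : Antitone lam)
    (i : Fin r) : topCol lam i ≤ N := by
  have := hlam (Fin.mk_le_of_le_val (Nat.zero_le i) : ⟨0, hr⟩ ≤ i)
  unfold topCol
  omega

theorem topCol_cast (i : Fin r) : (topCol lam i : ℤ) = lam i + rhoWt r i := by
  simp [topCol, rhoWt]

noncomputable def groundV (lam : Fin r → ℕ) (k j : ℕ) : Option (Fin r) :=
  (Function.partialInv (topCol lam) j).filter fun c => k ≤ c

noncomputable def groundH (lam : Fin r → ℕ) (N : ℕ) (i : Fin r) (m : ℕ) : Option (Fin r) :=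
  if N - topCol lam i < m then some i else none

theorem groundH_isSome {i : Fin r} {m : ℕ} :
    (groundH lam N i m).isSome ↔ N - topCol lam i < m := by
  unfold groundH
  split_ifs with h <;> simp [h]

theorem groundV_eq_some_iff (hlam : Antitone lam) {k j : ℕ} {c : Fin r} :
    groundV lam k j = some c ↔ topCol lam c = j ∧ k ≤ c := by
  simp [groundV, Option.filter_eq_some_iff, (topCol_strictAnti hlam).injective.isPartialInv _ _]

theorem groundV_eq_none (hlam : Antitone lam) {i : Fin r} {j : ℕ} (h : topCol lam i < j) :
    groundV lam i j = none := by
  refine Option.eq_none_iff_forall_ne_some.2 fun c hc => ?_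
  obtain ⟨rfl, hic⟩ := (groundV_eq_some_iff hlam).1 hc
  exact h.not_ge ((topCol_strictAnti hlam).antitone hic)

theorem groundV_succ_eq_none (hlam : Antitone lam) {i : Fin r} {j : ℕ} (h : topCol lam i ≤ j) :
    groundV lam (i + 1) j = none := by
  refine Option.eq_none_iff_forall_ne_some.2 fun c hc => ?_
  obtain ⟨rfl, hic⟩ := (groundV_eq_some_iff hlam).1 hc
  exact h.not_gt (topCol_strictAnti hlam (Fin.lt_def.2 hic))

theorem groundV_succ_of_ne (hlam : Antitone lam) {i : Fin r} {j : ℕ} (h : j ≠ topCol lam i) :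
    groundV lam (i + 1) j = groundV lam i j := by
  refine Option.ext fun c => ?_
  rw [groundV_eq_some_iff hlam, groundV_eq_some_iff hlam]
  refine and_congr_right fun hc => ⟨fun hic => by omega, fun hic => ?_⟩
  have hci : c ≠ i := by rintro rfl; exact h hc.symm
  have : (i : ℕ) ≠ c := fun h' => hci (Fin.ext h'.symm)
  omega

noncomputable def groundState (hlam : Antitone lam) (hN : ∀ i, topCol lam i ≤ N) :
    CState r N lam 1 where
  V k j := groundV lam k j
  H i m := groundH lam N i m
  top i j := by simp [groundV_eq_some_iff hlam, topCol, eq_comm]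
  bottom j := by
    refine Option.eq_none_iff_forall_ne_some.2 fun c hc => ?_
    have := ((groundV_eq_some_iff hlam).1 hc).2
    simp only [Fin.val_last] at this
    omega
  left i := by simp [groundH]
  right i := by simp [groundH]
  adm i j := by
    have := hN i
    have := j.isLt
    simp only [Fin.val_castSucc, Fin.val_succ, groundH]
    rcases lt_trichotomy (j : ℕ) (topCol lam i) with hlt | heq | hgt
    · rw [if_pos (by omega), if_pos (by omega), groundV_succ_of_ne hlam hlt.ne]
      exact admC_some_self fun c hc => ((groundV_eq_some_iff hlam).1 hc).2
    · rw [if_neg (by omega), if_pos (by omega), groundV_succ_eq_none hlam heq.ge, heq,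
        (groundV_eq_some_iff hlam).2 ⟨rfl, le_rfl⟩]
      exact Or.inr <| Or.inr <| Or.inr ⟨i, rfl, rfl, rfl, rfl⟩
    · rw [if_neg (by omega), if_neg (by omega), groundV_succ_eq_none hlam hgt.le,
        groundV_eq_none hlam hgt]
      exact Or.inl ⟨rfl, rfl, rfl, rfl⟩

theorem cweight_groundState (hlam : Antitone lam) (hN : ∀ i, topCol lam i ≤ N) :
    cweight (groundState hlam hN) = mono fun i => (topCol lam i : ℤ) := by
  have hrow : ∀ i, (∏ k : Fin (N + 1),
      if (groundH lam N i k.castSucc).isSome then mono (Pi.single i 1) else 1)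
        = mono (Pi.single i (topCol lam i : ℤ)) := by
    intro i
    simp only [groundH_isSome, Fin.val_castSucc]
    rw [Finset.prod_ite, Finset.prod_const_one, mul_one, Finset.prod_const,
      Fin.card_filter_sub_lt (hN i), ← mono_nsmul, ← Pi.single_smul, nsmul_one]
  calc cweight (groundState hlam hN)
      = ∏ i, mono (Pi.single i (topCol lam i : ℤ)) := Finset.prod_congr rfl fun i _ => hrow i
    _ = mono fun i => (topCol lam i : ℤ) := by rw [← mono_sum, Finset.univ_sum_single]

namespace CState

theorem ext {w : Equiv.Perm (Fin r)} {s t : CState r N lam w} (hV : s.V = t.V) (hH : s.H = t.H) :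
    s = t := by
  cases s
  cases t
  congr

/-- Columns are labelled from right to left, so the vertex of row `i` between the horizontal
edges `m` and `m + 1` lies in column `m.rev`. -/
theorem adm_rev {w : Equiv.Perm (Fin r)} (s : CState r N lam w) (i : Fin r) (m : Fin (N + 1)) :
    admC r (s.H i m.castSucc) (s.V i.castSucc m.rev) (s.H i m.succ) (s.V i.succ m.rev) := by
  have h := s.adm i m.rev
  have hm : N - (m.rev : ℕ) = m := by simp [Fin.val_rev]; omega
  simp only [hm] at h
  exact h

variable (s : CState r N lam 1)

theorem H_eq_groundH (hlam : Antitone lam) {i : Fin r}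
    (htop : ∀ j, s.V i.castSucc j = groundV lam i j) (m : Fin (N + 2)) :
    s.H i m = groundH lam N i m := by
  have hnone : ∀ m : Fin (N + 2), (m : ℕ) ≤ N - topCol lam i → s.H i m = none := by
    refine Fin.induction (fun _ => s.left i) fun m ih hm => ?_
    simp only [Fin.val_succ] at hm
    refine (s.adm_rev i m).right_eq_none (ih (by simp; omega)) ?_
    rw [htop, groundV_eq_none hlam]
    simp [Fin.val_rev]
    omega
  have hsome : ∀ m : Fin (N + 2), N - topCol lam i < m → s.H i m = some i := by
    refine Fin.reverseInduction (fun _ => by simpa using s.right i) fun m ih hm => ?_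
    simp only [Fin.val_castSucc] at hm
    refine (s.adm_rev i m).left_eq_of_right (ih (by simp; omega)) ?_
    rw [htop, Ne, groundV_eq_some_iff hlam]
    simp [Fin.val_rev]
    omega
  unfold groundH
  split_ifs with h
  exacts [hsome m h, hnone m (by omega)]

theorem V_succ_eq_groundV (hlam : Antitone lam) {i : Fin r} (hN : topCol lam i ≤ N)
    (htop : ∀ j, s.V i.castSucc j = groundV lam i j) (j : Fin (N + 1)) :
    s.V i.succ j = groundV lam (i + 1) j := by
  obtain ⟨m, rfl⟩ := Fin.rev_surjective j
  have hadm := s.adm_rev i m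
  have hH := s.H_eq_groundH hlam htop
  have hj : (m.rev : ℕ) = N - m := by simp [Fin.val_rev]
  by_cases hm : N - topCol lam i < m
  · have hleft : s.H i m.castSucc = some i := by rw [hH]; simp [groundH, hm]
    have hright : s.H i m.succ = some i := by rw [hH]; simp [groundH]; omega
    rw [hadm.bottom_eq_top hleft hright, htop, groundV_succ_of_ne hlam (by omega)]
  · have hleft : s.H i m.castSucc = none := by rw [hH]; simp [groundH, hm]
    rw [hadm.bottom_eq_none hleft, groundV_succ_eq_none hlam (by omega)]

theorem V_eq_groundV (hlam : Antitone lam) (hN : ∀ i, topCol lam i ≤ N) (k : Fin (r + 1))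
    (j : Fin (N + 1)) : s.V k j = groundV lam k j := by
  induction k using Fin.induction generalizing j with
  | zero => exact Option.ext fun c => by simp [s.top, groundV_eq_some_iff hlam, topCol, eq_comm]
  | succ i ih => exact s.V_succ_eq_groundV hlam (hN i) ih j

theorem eq_groundState (hlam : Antitone lam) (hN : ∀ i, topCol lam i ≤ N) :
    s = groundState hlam hN :=
  ext (funext₂ (s.V_eq_groundV hlam hN))
    (funext₂ fun i => s.H_eq_groundH hlam (s.V_eq_groundV hlam hN i.castSucc))

end CState

end GroundState

/-- The system `S_{z,λ,1}` (identity permutation boundary conditions) has exactly one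
admissible state, and its Boltzmann weight is `z^{λ+ρ}`. -/
theorem ground_state (r N : ℕ) (hr : 0 < r) (lam : Fin r → ℕ)
    (hdom : ∀ i j : Fin r, i ≤ j → lam j ≤ lam i) (hN : lam ⟨0, hr⟩ + r - 1 ≤ N) :
    (∃! _s : CState r N lam 1, True) ∧
    ∀ s : CState r N lam 1,
      cweight s = mono (fun i => (lam i : ℤ) + rhoWt r i) := by
  have hlam : Antitone lam := fun i j => hdom i j
  have hcol : ∀ i, topCol lam i ≤ N := topCol_le hr hN hlam
  refine ⟨⟨groundState hlam hcol, trivial, fun s _ => s.eq_groundState hlam hcol⟩, fun s => ?_⟩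
  rw [s.eq_groundState hlam hcol, cweight_groundState]
  simp only [topCol_cast]
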